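/- arXiv:1505.03312 — 2 statements merged into one kernel-verified Lean document; each statement's English description precedes it below -/
import Mathlib

section
/- Let Δ be an additive subgroup of ℂ and b ∈ ℂ with not both Δ = {0} and b = 0. Then A_2, the ℂ-vector space with basis {x_α : α ∈ Δ} and product x_α ∘ x_β = (β+b) x_{α+β}, is a simple Novikov algebra. Moreover, its symmetrized product satisfies x_α ∗ x_β = (α+β+2b) x_{α+β}, and if 2b ∉ Δ then A_2 = A_2∗A_2, i.e. A_2 is spanned over ℂ by the elements a∗b with a,b ∈ A_2. -/
set_option maxSynthPendingDepth 3

namespace QLCA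

variable {V : Type} [AddCommGroup V] [Module ℂ V]

/-- Bilinearity over `ℂ` of a binary product. -/
def IsBilin (f : V → V → V) : Prop :=
  (∀ x y z : V, f (x + y) z = f x z + f y z) ∧
  (∀ x y z : V, f x (y + z) = f x y + f x z) ∧
  (∀ (c : ℂ) (x y : V), f (c • x) y = c • f x y) ∧
  (∀ (c : ℂ) (x y : V), f x (c • y) = c • f x y)

/-- `(V, f)` is a Novikov algebra over `ℂ`. -/
def IsNovikov (f : V → V → V) : Prop :=
  IsBilin f ∧
  (∀ a b c : V, f (f a b) c - f a (f b c) = f (f b a) c - f b (f a c)) ∧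
  (∀ a b c : V, f (f a b) c = f (f a c) b)

/-- `I` is an ideal of the Novikov algebra `(V, f)`. -/
def IsNovikovIdeal (f : V → V → V) (I : Submodule ℂ V) : Prop :=
  ∀ a ∈ I, ∀ b : V, f a b ∈ I ∧ f b a ∈ I

/-- The Novikov algebra `(V, f)` is simple. -/
def NovikovSimple (f : V → V → V) : Prop :=
  (∃ a b : V, f a b ≠ 0) ∧
  ∀ I : Submodule ℂ V, IsNovikovIdeal f I → I = ⊥ ∨ I = ⊤

/-- `(V, f)` is a Lie algebra over `ℂ`. -/
def IsLieBracket (f : V → V → V) : Prop :=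
  IsBilin f ∧
  (∀ a b : V, f a b = - f b a) ∧
  (∀ a b c : V, f a (f b c) = f (f a b) c + f b (f a c))

/-- The Gel'fand-Dorfman compatibility condition between a Novikov product and
a Lie bracket. -/
def GDcompat (mul lie : V → V → V) : Prop :=
  ∀ a b c : V,
    lie (mul a b) c - lie (mul a c) b + mul (lie a b) c - mul (lie a c) b
      - mul a (lie b c) = 0

/-- `(V, mul, lie)` is a Gel'fand-Dorfman bialgebra. -/
def IsGD (mul lie : V → V → V) : Prop :=
  IsNovikov mul ∧ IsLieBracket lie ∧ GDcompat mul lie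

/-- `I` is a Gel'fand-Dorfman ideal of `(V, mul, lie)`. -/
def IsGDIdeal (mul lie : V → V → V) (I : Submodule ℂ V) : Prop :=
  IsNovikovIdeal mul I ∧ ∀ a ∈ I, ∀ b : V, lie a b ∈ I ∧ lie b a ∈ I

/-- The symmetrized (Novikov-Jordan) product `a ∗ b = a∘b + b∘a`. -/
def sProd (mul : V → V → V) (a b : V) : V := mul a b + mul b a

/-- `I` is an ideal of the Novikov-Jordan algebra `(V, ∗)`. -/
def IsNJIdeal (mul : V → V → V) (I : Submodule ℂ V) : Prop :=
  ∀ a ∈ I, ∀ b : V, sProd mul a b ∈ I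

/-- The Novikov-Jordan algebra `(V, ∗)` is simple. -/
def NJSimple (mul : V → V → V) : Prop :=
  (∃ a b : V, sProd mul a b ≠ 0) ∧
  ∀ I : Submodule ℂ V, IsNJIdeal mul I → I = ⊥ ∨ I = ⊤

/-- An element of the free module `R = ℂ[∂]V`, recorded by its coefficients:
`a : Conf V` represents `∑ₘ ∂^m (a m)`. -/
abbrev Conf (V : Type) [Zero V] := ℕ →₀ V

/-- A polynomial in `λ` with coefficients in `R = ℂ[∂]V`: `P : LP V`
represents `∑ₙ λ^n (P n)`. -/
abbrev LP (V : Type) [Zero V] := ℕ →₀ (ℕ →₀ V)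

/-- Multiplication by `∂` on `ℂ[∂]V`. -/
noncomputable def Dop (a : Conf V) : Conf V := Finsupp.mapDomain (· + 1) a

/-- Multiplication by `λ` on `λ`-polynomials. -/
noncomputable def lmul (P : LP V) : LP V := Finsupp.mapDomain (· + 1) P

/-- Multiplication by `∂` on `λ`-polynomials. -/
noncomputable def dmul (P : LP V) : LP V := Finsupp.mapRange (Dop (V := V)) (by simp [Dop]) P

/-- Multiplication by `λ + ∂` on `λ`-polynomials. -/
noncomputable def ldOp (P : LP V) : LP V := lmul P + dmul P

/-- The `λ`-bracket on `R = ℂ[∂]V` obtained from the generator values `B u v`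
(`u, v ∈ V`) by extension via `ℂ`-bilinearity and conformal sesquilinearity:
`[(∂^m u) λ (∂^n v)] = (-λ)^m (λ+∂)^n [u λ v]`. -/
noncomputable def qbr (B : V → V → LP V) (a b : Conf V) : LP V :=
  Finsupp.sum a fun m am => Finsupp.sum b fun n bn =>
    ((-1 : ℂ) ^ m) • (lmul (V := V))^[m] ((ldOp (V := V))^[n] (B am bn))

/-- The substitution `λ ↦ -λ-∂` in a `λ`-polynomial
(used to express skew-symmetry `[a λ b] = -[b (-λ-∂) a]`). -/
noncomputable def nsubst (P : LP V) : LP V :=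
  Finsupp.sum P fun n cn => ((-1 : ℂ) ^ n) • (ldOp (V := V))^[n] (Finsupp.single 0 cn)

/-- `I` is an ideal of `R = ℂ[∂]V` with `λ`-bracket `qbr B`: a
`ℂ[∂]`-submodule (a `ℂ`-submodule closed under `∂`) such that every
`λ`-coefficient of `[a λ x]` lies in `I` for all `a ∈ R`, `x ∈ I`. -/
def IsConfIdeal (B : V → V → LP V) (I : Submodule ℂ (Conf V)) : Prop :=
  (∀ x ∈ I, Dop x ∈ I) ∧
  (∀ a : Conf V, ∀ x ∈ I, ∀ n : ℕ, qbr B a x n ∈ I)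

/-- The conformal algebra `R = ℂ[∂]V` with `λ`-bracket `qbr B` is simple:
its `λ`-bracket is not identically zero and its only ideals are `0` and `R`. -/
def ConfSimple (B : V → V → LP V) : Prop :=
  (∃ a b : Conf V, qbr B a b ≠ 0) ∧
  ∀ I : Submodule ℂ (Conf V), IsConfIdeal B I → I = ⊥ ∨ I = ⊤

/-- `R = ℂ[∂]V` with the `λ`-bracket `qbr B` is a Lie conformal algebra: the
bracket is `ℂ`-bilinear, satisfies conformal sesquilinearity, skew-symmetry
`[a λ b] = -[b (-λ-∂) a]`, and the Jacobi identity
`[a λ [b μ c]] = [[a λ b] (λ+μ) c] + [b μ [a λ c]]` (the latter written out by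
comparing the coefficients of `λ^p μ^q` on both sides). -/
def IsLieConf (B : V → V → LP V) : Prop :=
  (∀ a b c : Conf V, qbr B (a + b) c = qbr B a c + qbr B b c) ∧
  (∀ a b c : Conf V, qbr B a (b + c) = qbr B a b + qbr B a c) ∧
  (∀ (k : ℂ) (a b : Conf V), qbr B (k • a) b = k • qbr B a b) ∧
  (∀ (k : ℂ) (a b : Conf V), qbr B a (k • b) = k • qbr B a b) ∧
  (∀ a b : Conf V, qbr B (Dop a) b = - lmul (qbr B a b)) ∧
  (∀ a b : Conf V, qbr B a (Dop b) = ldOp (qbr B a b)) ∧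
  (∀ a b : Conf V, qbr B a b = - nsubst (qbr B b a)) ∧
  (∀ a b c : Conf V, ∀ p q : ℕ,
    qbr B a (qbr B b c q) p =
      (∑ n ∈ Finset.Icc q (p + q),
        (n.choose q : ℂ) • qbr B (qbr B a b (p + q - n)) c n)
      + qbr B b (qbr B a c p) q)

/-- Generator values of the `λ`-bracket of the quadratic Lie conformal algebra
associated to a Gel'fand-Dorfman bialgebra `(V, mul, lie)`:
`[u λ v] = ∂(v∘u) + [v,u] + λ(u∘v + v∘u)`. -/
noncomputable def gdB (mul lie : V → V → V) (u v : V) : LP V :=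
  Finsupp.single 0 (Finsupp.single 1 (mul v u) + Finsupp.single 0 (lie v u))
    + Finsupp.single 1 (Finsupp.single 0 (mul u v + mul v u))

end QLCA

open QLCA

/-- The Novikov product of `A₂`: `x_α ∘ x_β = (β+b) x_{α+β}`, extended
bilinearly. -/
noncomputable def A2mul (Δ : AddSubgroup ℂ) (b : ℂ) (u v : Δ →₀ ℂ) : Δ →₀ ℂ :=
  Finsupp.sum u fun α uα => Finsupp.sum v fun β vβ =>
    (uα * vβ * ((β : ℂ) + b)) • Finsupp.single (α + β) (1 : ℂ)

section Helpers

variable {Δ : AddSubgroup ℂ} {b : ℂ}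

lemma A2mul_zero_left (v : Δ →₀ ℂ) : A2mul Δ b 0 v = 0 := by simp [A2mul]

lemma A2mul_zero_right (u : Δ →₀ ℂ) : A2mul Δ b u 0 = 0 := by simp [A2mul]

lemma A2mul_add_left (u u' v : Δ →₀ ℂ) :
    A2mul Δ b (u + u') v = A2mul Δ b u v + A2mul Δ b u' v := by
  unfold A2mul
  rw [Finsupp.sum_add_index' (by intro a; simp)]
  intro α a₁ a₂
  rw [← Finsupp.sum_add]
  apply Finsupp.sum_congr
  intro β _
  rw [← add_smul]
  congr 1
  ring

lemma A2mul_add_right (u v v' : Δ →₀ ℂ) :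
    A2mul Δ b u (v + v') = A2mul Δ b u v + A2mul Δ b u v' := by
  unfold A2mul
  rw [← Finsupp.sum_add]
  apply Finsupp.sum_congr
  intro α _
  rw [Finsupp.sum_add_index' (by intro a; simp)]
  intro β c₁ c₂
  rw [← add_smul]
  congr 1
  ring

lemma A2mul_smul_left (k : ℂ) (u v : Δ →₀ ℂ) :
    A2mul Δ b (k • u) v = k • A2mul Δ b u v := by
  unfold A2mul
  rw [Finsupp.sum_smul_index (by intro i; simp), Finsupp.smul_sum]
  apply Finsupp.sum_congr
  intro α _
  rw [Finsupp.smul_sum]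
  apply Finsupp.sum_congr
  intro β _
  rw [smul_smul]
  congr 1
  ring

lemma A2mul_smul_right (k : ℂ) (u v : Δ →₀ ℂ) :
    A2mul Δ b u (k • v) = k • A2mul Δ b u v := by
  unfold A2mul
  rw [Finsupp.smul_sum]
  apply Finsupp.sum_congr
  intro α _
  rw [Finsupp.sum_smul_index (by intro i; simp), Finsupp.smul_sum]
  apply Finsupp.sum_congr
  intro β _
  rw [smul_smul]
  congr 1
  ring

lemma A2mul_single_single (α β : Δ) (a c : ℂ) :
    A2mul Δ b (Finsupp.single α a) (Finsupp.single β c)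
      = (a * c * ((β : ℂ) + b)) • Finsupp.single (α + β) (1 : ℂ) := by
  unfold A2mul
  rw [Finsupp.sum_single_index (by simp), Finsupp.sum_single_index (by simp)]

lemma A2L_apply (u : Δ →₀ ℂ) (γ : Δ) :
    (A2mul Δ b (Finsupp.single 0 1) u) γ = u γ * ((γ : ℂ) + b) := by
  unfold A2mul
  rw [Finsupp.sum_single_index (by simp), Finsupp.sum_apply, Finsupp.sum]
  rw [Finset.sum_eq_single γ]
  · simp
  · intro β _ hβ
    simp [Finsupp.single_apply, hβ]
  · intro h
    simp [Finsupp.notMem_support_iff.mp h]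

lemma tri_zero {M : Type*} [AddCommGroup M] (T : (Δ →₀ ℂ) → (Δ →₀ ℂ) → (Δ →₀ ℂ) → M)
    (h1 : ∀ u u' v w, T (u + u') v w = T u v w + T u' v w)
    (h2 : ∀ u v v' w, T u (v + v') w = T u v w + T u v' w)
    (h3 : ∀ u v w w', T u v (w + w') = T u v w + T u v w')
    (hz1 : ∀ v w, T 0 v w = 0) (hz2 : ∀ u w, T u 0 w = 0) (hz3 : ∀ u v, T u v 0 = 0)
    (hs : ∀ (α β γ : Δ) (a c e : ℂ),
      T (Finsupp.single α a) (Finsupp.single β c) (Finsupp.single γ e) = 0) :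
    ∀ u v w, T u v w = 0 := by
  intro u v w
  induction u using Finsupp.induction_linear with
  | zero => exact hz1 _ _
  | add f g hf hg => rw [h1, hf, hg, add_zero]
  | single α a =>
    induction v using Finsupp.induction_linear with
    | zero => exact hz2 _ _
    | add f g hf hg => rw [h2, hf, hg, add_zero]
    | single β c =>
      induction w using Finsupp.induction_linear with
      | zero => exact hz3 _ _
      | add f g hf hg => rw [h3, hf, hg, add_zero]
      | single γ e => exact hs α β γ a c e

lemma A2_right_sym (u v w : Δ →₀ ℂ) :
    A2mul Δ b (A2mul Δ b u v) w = A2mul Δ b (A2mul Δ b u w) v := by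
  have := tri_zero (fun u v w => A2mul Δ b (A2mul Δ b u v) w - A2mul Δ b (A2mul Δ b u w) v)
    (by intro u u' v w; simp only [A2mul_add_left, A2mul_add_right]; abel)
    (by intro u v v' w; simp only [A2mul_add_left, A2mul_add_right]; abel)
    (by intro u v w w'; simp only [A2mul_add_left, A2mul_add_right]; abel)
    (by intro v w; simp [A2mul_zero_left, A2mul_zero_right])
    (by intro u w; simp [A2mul_zero_left, A2mul_zero_right])
    (by intro u v; simp [A2mul_zero_left, A2mul_zero_right])
    (by
      intro α β γ a c e
      simp only [A2mul_single_single, A2mul_smul_left, A2mul_smul_right, smul_smul]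
      rw [add_right_comm α γ β]
      rw [← sub_smul]
      convert zero_smul ℂ _
      ring)
    u v w
  exact sub_eq_zero.mp (by simpa using this)

lemma A2_left_sym (u v w : Δ →₀ ℂ) :
    A2mul Δ b (A2mul Δ b u v) w - A2mul Δ b u (A2mul Δ b v w)
      = A2mul Δ b (A2mul Δ b v u) w - A2mul Δ b v (A2mul Δ b u w) := by
  have := tri_zero (fun u v w =>
      A2mul Δ b (A2mul Δ b u v) w - A2mul Δ b u (A2mul Δ b v w)
        - (A2mul Δ b (A2mul Δ b v u) w - A2mul Δ b v (A2mul Δ b u w)))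
    (by intro u u' v w; simp only [A2mul_add_left, A2mul_add_right]; abel)
    (by intro u v v' w; simp only [A2mul_add_left, A2mul_add_right]; abel)
    (by intro u v w w'; simp only [A2mul_add_left, A2mul_add_right]; abel)
    (by intro v w; simp [A2mul_zero_left, A2mul_zero_right])
    (by intro u w; simp [A2mul_zero_left, A2mul_zero_right])
    (by intro u v; simp [A2mul_zero_left, A2mul_zero_right])
    (by
      intro α β γ a c e
      simp only [A2mul_single_single, A2mul_smul_left, A2mul_smul_right, smul_smul]
      simp only [add_comm, add_left_comm, add_assoc]
      push_cast
      module)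
    u v w
  exact sub_eq_zero.mp (by simpa using this)

lemma comp_mem (I : Submodule ℂ (Δ →₀ ℂ)) (hI : IsNovikovIdeal (A2mul Δ b) I) :
    ∀ (n : ℕ) (u : Δ →₀ ℂ), u ∈ I → u.support.card ≤ n →
      ∀ β₀ : Δ, Finsupp.single β₀ (u β₀) ∈ I := by
  intro n
  induction n with
  | zero =>
    intro u hu hc β₀
    have : u = 0 := by
      rw [← Finsupp.support_eq_empty]
      exact Finset.card_eq_zero.mp (Nat.le_zero.mp hc)
    subst this
    simp only [Finsupp.coe_zero, Pi.zero_apply, Finsupp.single_zero]; exact I.zero_mem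
  | succ n ih =>
    intro u hu hc β₀
    by_cases h0 : u β₀ = 0
    · rw [h0, Finsupp.single_zero]; exact I.zero_mem
    by_cases hcard : u.support.card ≤ n
    · exact ih u hu hcard β₀
    by_cases hss : u.support ⊆ {β₀}
    · have hu' : u = Finsupp.single β₀ (u β₀) := by
        ext γ
        rcases eq_or_ne γ β₀ with rfl | hγ
        · simp
        · have : γ ∉ u.support := fun h => hγ (Finset.mem_singleton.mp (hss h))
          rw [Finsupp.notMem_support_iff.mp this, Finsupp.single_eq_of_ne' (Ne.symm hγ)]
      rw [← hu']; exact hu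
    · obtain ⟨β₁, hβ₁s, hβ₁ne⟩ : ∃ β₁ ∈ u.support, β₁ ≠ β₀ := by
        by_contra h
        push_neg at h
        exact hss fun x hx => Finset.mem_singleton.mpr (h x hx)
      set v := A2mul Δ b (Finsupp.single 0 1) u - (((β₁ : ℂ)) + b) • u with hv
      have hvI : v ∈ I := I.sub_mem (hI u hu _).2 (I.smul_mem _ hu)
      have hvap : ∀ γ : Δ, v γ = ((γ : ℂ) - β₁) * u γ := by
        intro γ
        simp only [hv, Finsupp.sub_apply, Finsupp.smul_apply, A2L_apply, smul_eq_mul]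
        ring
      have hsub : v.support ⊆ u.support.erase β₁ := by
        intro γ hγ
        rw [Finsupp.mem_support_iff] at hγ
        rw [Finset.mem_erase, Finsupp.mem_support_iff]
        constructor
        · rintro rfl
          exact hγ (by rw [hvap]; simp)
        · intro h
          exact hγ (by rw [hvap, h, mul_zero])
      have hcard' : v.support.card ≤ n := by
        have := Finset.card_le_card hsub
        rw [Finset.card_erase_of_mem hβ₁s] at this
        omega
      have hne : ((β₀ : ℂ) - (β₁ : ℂ)) ≠ 0 :=
        sub_ne_zero.mpr fun h => hβ₁ne (Subtype.coe_injective h).symm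
      have heq : Finsupp.single β₀ (u β₀)
          = ((β₀ : ℂ) - (β₁ : ℂ))⁻¹ • Finsupp.single β₀ (v β₀) := by
        rw [hvap, Finsupp.smul_single, smul_eq_mul, inv_mul_cancel_left₀ hne]
      rw [heq]
      exact I.smul_mem _ (ih v hvI hcard' β₀)

lemma singles_in (I : Submodule ℂ (Δ →₀ ℂ)) (hI : IsNovikovIdeal (A2mul Δ b) I)
    (α : Δ) (hx : Finsupp.single α (1 : ℂ) ∈ I) (hα : (α : ℂ) + b ≠ 0) :
    ∀ γ : Δ, Finsupp.single γ (1 : ℂ) ∈ I := by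
  intro γ
  have h1 := (hI _ hx (Finsupp.single (γ - α) 1)).2
  rw [A2mul_single_single] at h1
  have h2 : γ - α + α = γ := by abel
  rw [h2, one_mul, one_mul] at h1
  have : Finsupp.single γ (1 : ℂ) = ((α : ℂ) + b)⁻¹ • (((α : ℂ) + b) • Finsupp.single γ (1 : ℂ)) := by
    rw [smul_smul, inv_mul_cancel₀ hα, one_smul]
  rw [this]
  exact I.smul_mem _ h1

lemma I_top (I : Submodule ℂ (Δ →₀ ℂ)) (h : ∀ γ : Δ, Finsupp.single γ (1 : ℂ) ∈ I) :
    I = ⊤ := by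
  rw [eq_top_iff]
  rintro u -
  induction u using Finsupp.induction_linear with
  | zero => exact I.zero_mem
  | add f g hf hg => exact I.add_mem hf hg
  | single α a =>
    have : Finsupp.single α a = a • Finsupp.single α (1 : ℂ) := by
      rw [Finsupp.smul_single, smul_eq_mul, mul_one]
    rw [this]
    exact I.smul_mem _ (h α)

lemma exists_good (hnt : ¬(Δ = ⊥ ∧ b = 0)) : ∃ α : Δ, (α : ℂ) + b ≠ 0 := by
  by_cases hb : b = 0
  · have hΔ : Δ ≠ ⊥ := fun h => hnt ⟨h, hb⟩
    obtain ⟨x, hxΔ, hx0⟩ : ∃ x ∈ Δ, x ≠ 0 := by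
      by_contra h
      push_neg at h
      exact hΔ ((AddSubgroup.eq_bot_iff_forall Δ).mpr h)
    exact ⟨⟨x, hxΔ⟩, by simpa [hb] using hx0⟩
  · exact ⟨0, by simpa using hb⟩

lemma simple_main (hnt : ¬(Δ = ⊥ ∧ b = 0)) (I : Submodule ℂ (Δ →₀ ℂ))
    (hI : IsNovikovIdeal (A2mul Δ b) I) (hne : I ≠ ⊥) : I = ⊤ := by
  obtain ⟨u, huI, hu0⟩ : ∃ u ∈ I, u ≠ 0 := by
    by_contra h
    push_neg at h
    exact hne ((Submodule.eq_bot_iff I).mpr h)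
  obtain ⟨β₀, hβ₀⟩ : ∃ β₀ : Δ, u β₀ ≠ 0 := by
    by_contra h
    push_neg at h
    exact hu0 (Finsupp.ext h)
  have hsingle : Finsupp.single β₀ (1 : ℂ) ∈ I := by
    have h1 := comp_mem I hI u.support.card u huI le_rfl β₀
    have : Finsupp.single β₀ (1 : ℂ) = (u β₀)⁻¹ • Finsupp.single β₀ (u β₀) := by
      rw [Finsupp.smul_single, smul_eq_mul, inv_mul_cancel₀ hβ₀]
    rw [this]
    exact I.smul_mem _ h1
  by_cases hgood : (β₀ : ℂ) + b ≠ 0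
  · exact I_top I (singles_in I hI β₀ hsingle hgood)
  · push_neg at hgood
    -- β₀ = -b; find β ∈ Δ with β ≠ 0 and β + b ≠ 0
    have hΔ : Δ ≠ ⊥ := by
      rintro rfl
      have h0' : (β₀ : ℂ) = 0 := AddSubgroup.mem_bot.mp β₀.2
      exact hnt ⟨rfl, by rw [h0', zero_add] at hgood; exact hgood⟩
    obtain ⟨x, hxΔ, hx0⟩ : ∃ x ∈ Δ, x ≠ 0 := by
      by_contra h
      push_neg at h
      exact hΔ ((AddSubgroup.eq_bot_iff_forall Δ).mpr h)
    obtain ⟨β, hβ0, hβb⟩ : ∃ β : Δ, (β : ℂ) ≠ 0 ∧ (β : ℂ) + b ≠ 0 := by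
      by_cases hxb : x + b ≠ 0
      · exact ⟨⟨x, hxΔ⟩, hx0, hxb⟩
      · push_neg at hxb
        refine ⟨⟨-x, Δ.neg_mem hxΔ⟩, by simpa using hx0, ?_⟩
        have hb : b = -x := by linear_combination hxb
        intro hcontra
        have h2 : -x + b = 0 := by simpa using hcontra
        rw [hb] at h2
        exact hx0 (by linear_combination -h2/2)
    -- A2mul x_{β₀} x_β = (β+b) • x_{β₀+β} ∈ I, and (β₀+β)+b = β ≠ 0
    have h1 := (hI _ hsingle (Finsupp.single β 1)).1
    rw [A2mul_single_single, one_mul, one_mul] at h1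
    have h2 : Finsupp.single (β₀ + β) (1 : ℂ) ∈ I := by
      have : Finsupp.single (β₀ + β) (1 : ℂ)
          = ((β : ℂ) + b)⁻¹ • (((β : ℂ) + b) • Finsupp.single (β₀ + β) (1 : ℂ)) := by
        rw [smul_smul, inv_mul_cancel₀ hβb, one_smul]
      rw [this]
      exact I.smul_mem _ h1
    refine I_top I (singles_in I hI (β₀ + β) h2 ?_)
    push_cast
    intro h
    exact hβ0 (by linear_combination h - hgood)


end Helpers

/-- `A₂` is a simple Novikov algebra (provided not both `Δ = 0`
and `b = 0`), its symmetrized product satisfies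
`x_α ∗ x_β = (α+β+2b) x_{α+β}`, and if `2b ∉ Δ` then `A₂ = A₂ ∗ A₂`. -/
theorem stmt_13 (Δ : AddSubgroup ℂ) (b : ℂ) (hnt : ¬(Δ = ⊥ ∧ b = 0)) :
    IsNovikov (A2mul Δ b) ∧ NovikovSimple (A2mul Δ b) ∧
    (∀ α β : Δ,
      sProd (A2mul Δ b) (Finsupp.single α 1) (Finsupp.single β 1)
        = ((α : ℂ) + (β : ℂ) + 2 * b) • Finsupp.single (α + β) (1 : ℂ)) ∧
    (2 * b ∉ Δ →
      Submodule.span ℂ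
        {x : Δ →₀ ℂ | ∃ u v : Δ →₀ ℂ, x = sProd (A2mul Δ b) u v} = ⊤) := by
  
  refine ⟨⟨⟨fun x y z => A2mul_add_left x y z, fun x y z => A2mul_add_right x y z,
      fun c x y => A2mul_smul_left c x y, fun c x y => A2mul_smul_right c x y⟩,
      fun x y z => A2_left_sym x y z, fun x y z => A2_right_sym x y z⟩,
    ⟨?_, ?_⟩, ?_, ?_⟩
  · obtain ⟨α₀, hα₀⟩ := exists_good hnt
    refine ⟨Finsupp.single 0 1, Finsupp.single α₀ 1, ?_⟩
    rw [A2mul_single_single, one_mul, one_mul]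
    exact smul_ne_zero hα₀ (by simp [Finsupp.single_eq_zero])
  · intro I hI
    by_cases h : I = ⊥
    · exact Or.inl h
    · exact Or.inr (simple_main hnt I hI h)
  · intro α β
    unfold sProd
    simp only [A2mul_single_single, one_mul]
    rw [add_comm β α, ← add_smul]
    congr 1
    ring
  · intro h2b
    rw [eq_top_iff]
    rintro u -
    induction u using Finsupp.induction_linear with
    | zero => exact Submodule.zero_mem _
    | add f g hf hg => exact Submodule.add_mem _ hf hg
    | single α a =>
      have hne : (α : ℂ) + 2 * b ≠ 0 := by
        intro h
        apply h2b
        have h' : (2 * b : ℂ) = -(α : ℂ) := by linear_combination h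
        rw [h']
        exact Δ.neg_mem α.2
      have hmem : sProd (A2mul Δ b) (Finsupp.single 0 1) (Finsupp.single α 1)
          ∈ Submodule.span ℂ {x : Δ →₀ ℂ | ∃ u v : Δ →₀ ℂ, x = sProd (A2mul Δ b) u v} :=
        Submodule.subset_span ⟨Finsupp.single 0 1, Finsupp.single α 1, rfl⟩
      have hval : sProd (A2mul Δ b) (Finsupp.single 0 1) (Finsupp.single α 1)
          = ((α : ℂ) + 2 * b) • Finsupp.single α (1 : ℂ) := by
        unfold sProd
        rw [A2mul_single_single, A2mul_single_single]
        push_cast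
        rw [zero_add, add_zero]
        rw [← add_smul]
        congr 1
        ring
      have heq : Finsupp.single α a = (a * ((α : ℂ) + 2 * b)⁻¹) •
          (((α : ℂ) + 2 * b) • Finsupp.single α (1 : ℂ)) := by
        rw [smul_smul, mul_assoc, inv_mul_cancel₀ hne, mul_one, Finsupp.smul_single,
          smul_eq_mul, mul_one]
      rw [heq, ← hval]
      exact Submodule.smul_mem _ _ hmem
end

section
/- Let Δ be an additive subgroup of ℂ and b ∈ ℂ. Then A_3, the ℂ-vector space with basis {x_{α,i} : α ∈ Δ, i ∈ ℕ} and product x_{α,i} ∘ x_{β,j} = (β+b) x_{α+β,i+j} + j x_{α+β,i+j−1}, is a simple Novikov algebra. Moreover, its symmetrized product satisfies x_{α,i} ∗ x_{β,j} = (α+β+2b) x_{α+β,i+j} + (i+j) x_{α+β,i+j−1}, and A_3 = A_3∗A_3, i.e. A_3 is spanned over ℂ by the elements a∗b with a,b ∈ A_3. -/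
set_option maxSynthPendingDepth 3

open QLCA

/-- The basis vector `x_{α,i}` of `A₃`. -/
noncomputable def x3 (Δ : AddSubgroup ℂ) (α : Δ) (i : ℕ) : (Δ × ℕ) →₀ ℂ :=
  Finsupp.single (α, i) 1

/-- The Novikov product of `A₃`:
`x_{α,i} ∘ x_{β,j} = (β+b) x_{α+β,i+j} + j x_{α+β,i+j−1}` (terms with second
index `−1` read as `0`; note the coefficient `j` vanishes there), extended
bilinearly. -/
noncomputable def A3mul (Δ : AddSubgroup ℂ) (b : ℂ) (u v : (Δ × ℕ) →₀ ℂ) :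
    (Δ × ℕ) →₀ ℂ :=
  Finsupp.sum u fun p up => Finsupp.sum v fun q vq => (up * vq) •
    (((q.1 : ℂ) + b) • x3 Δ (p.1 + q.1) (p.2 + q.2)
      + (q.2 : ℂ) • x3 Δ (p.1 + q.1) (p.2 + q.2 - 1))


namespace A3

variable {Δ : AddSubgroup ℂ} {b : ℂ}

lemma A3mul_x3 (α β : Δ) (i j : ℕ) :
    A3mul Δ b (x3 Δ α i) (x3 Δ β j)
      = ((β : ℂ) + b) • x3 Δ (α + β) (i + j) + (j : ℂ) • x3 Δ (α + β) (i + j - 1) := by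
  unfold A3mul x3
  rw [Finsupp.sum_single_index (by simp), Finsupp.sum_single_index (by simp)]
  simp

lemma A3mul_zero_left (v : (Δ × ℕ) →₀ ℂ) : A3mul Δ b 0 v = 0 := by
  simp [A3mul]

lemma A3mul_zero_right (u : (Δ × ℕ) →₀ ℂ) : A3mul Δ b u 0 = 0 := by
  simp [A3mul]

lemma A3mul_add_left (u u' v : (Δ × ℕ) →₀ ℂ) :
    A3mul Δ b (u + u') v = A3mul Δ b u v + A3mul Δ b u' v := by
  unfold A3mul
  apply Finsupp.sum_add_index' (by simp)
  intro p c1 c2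
  rw [← Finsupp.sum_add]
  refine Finsupp.sum_congr fun q _ => ?_
  rw [add_mul, add_smul]

lemma A3mul_add_right (u v v' : (Δ × ℕ) →₀ ℂ) :
    A3mul Δ b u (v + v') = A3mul Δ b u v + A3mul Δ b u v' := by
  unfold A3mul
  rw [← Finsupp.sum_add]
  refine Finsupp.sum_congr fun p _ => ?_
  apply Finsupp.sum_add_index' (by simp)
  intro q c1 c2
  rw [mul_add, add_smul]

lemma A3mul_smul_left (c : ℂ) (u v : (Δ × ℕ) →₀ ℂ) :
    A3mul Δ b (c • u) v = c • A3mul Δ b u v := by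
  unfold A3mul
  rw [Finsupp.sum_smul_index' (by simp), Finsupp.smul_sum]
  refine Finsupp.sum_congr fun p _ => ?_
  rw [Finsupp.smul_sum]
  refine Finsupp.sum_congr fun q _ => ?_
  rw [smul_eq_mul, mul_assoc, mul_smul]

lemma A3mul_smul_right (c : ℂ) (u v : (Δ × ℕ) →₀ ℂ) :
    A3mul Δ b u (c • v) = c • A3mul Δ b u v := by
  unfold A3mul
  rw [Finsupp.smul_sum]
  refine Finsupp.sum_congr fun p _ => ?_
  rw [Finsupp.sum_smul_index' (by simp), Finsupp.smul_sum]
  refine Finsupp.sum_congr fun q _ => ?_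
  simp only [smul_eq_mul, smul_smul]; ring_nf

end A3
namespace A3b
open A3
variable {Δ : AddSubgroup ℂ} {b : ℂ}

abbrev AMA (Δ : AddSubgroup ℂ) := AddMonoidAlgebra ℂ (↥Δ × ℕ)

noncomputable def derA (Δ : AddSubgroup ℂ) : AMA Δ →ₗ[ℂ] AMA Δ :=
  (Finsupp.lsum ℂ fun q => LinearMap.toSpanSingleton ℂ (AMA Δ)
    (((q.1 : ℂ)) • AddMonoidAlgebra.single q 1
      + ((q.2 : ℂ)) • AddMonoidAlgebra.single (q.1, q.2 - 1) 1))
    ∘ₗ (AddMonoidAlgebra.coeffLinearEquiv ℂ).toLinearMap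

lemma derA_single (q : ↥Δ × ℕ) (c : ℂ) :
    derA Δ (AddMonoidAlgebra.single q c)
      = c • (((q.1 : ℂ)) • AddMonoidAlgebra.single q 1
          + ((q.2 : ℂ)) • AddMonoidAlgebra.single (q.1, q.2 - 1) 1) := by
  rw [derA, LinearMap.comp_apply]
  erw [Finsupp.lsum_single]
  rw [LinearMap.toSpanSingleton_apply]

lemma mulE (p q : ↥Δ × ℕ) (c d : ℂ) :
    (AddMonoidAlgebra.single p c : AMA Δ) * AddMonoidAlgebra.single q d
      = (c * d) • AddMonoidAlgebra.single (p.1 + q.1, p.2 + q.2) (1 : ℂ) := by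
  rw [AddMonoidAlgebra.single_mul_single, AddMonoidAlgebra.smul_single, smul_eq_mul, mul_one]
  rfl

lemma A3mul_single (p q : ↥Δ × ℕ) (c d : ℂ) :
    A3mul Δ b (Finsupp.single p c) (Finsupp.single q d)
      = (c * d) • (((q.1 : ℂ) + b) • Finsupp.single (p.1 + q.1, p.2 + q.2) (1 : ℂ)
          + (q.2 : ℂ) • Finsupp.single (p.1 + q.1, p.2 + q.2 - 1) (1 : ℂ)) := by
  unfold A3mul
  rw [Finsupp.sum_single_index (by simp), Finsupp.sum_single_index (by simp)]
  rfl

lemma derA_leibniz_single (p q : ↥Δ × ℕ) (c d : ℂ) :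
    derA Δ (AddMonoidAlgebra.single p c * AddMonoidAlgebra.single q d)
      = derA Δ (AddMonoidAlgebra.single p c) * AddMonoidAlgebra.single q d
        + AddMonoidAlgebra.single p c * derA Δ (AddMonoidAlgebra.single q d) := by
  obtain ⟨α, i⟩ := p
  obtain ⟨β, j⟩ := q
  rw [mulE, map_smul, derA_single]
  rcases i with _ | i <;> rcases j with _ | j <;>
    simp only [derA_single, mulE, smul_add, add_mul, mul_add,
      Algebra.smul_mul_assoc, Algebra.mul_smul_comm,
      mul_one, one_mul, Nat.cast_zero, zero_smul, smul_zero, add_zero, zero_add,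
      Nat.add_zero, Nat.zero_add, Nat.add_succ, Nat.succ_add, Nat.succ_sub_one,
      Nat.cast_succ, AddSubgroup.coe_add, Nat.zero_sub, Nat.cast_add, Nat.cast_one] <;>
    module

lemma derA_leibniz (u v : AMA Δ) :
    derA Δ (u * v) = derA Δ u * v + u * derA Δ v := by
  induction u using AddMonoidAlgebra.induction_linear with
  | zero => simp
  | add f g hf hg => simp only [add_mul, map_add, hf, hg]; abel
  | single p c =>
    induction v using AddMonoidAlgebra.induction_linear with
    | zero => simp
    | add f g hf hg => simp only [mul_add, map_add, hf, hg]; abel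
    | single q d => exact derA_leibniz_single p q c d

/-- bridge : A3mul is `u * (derA v + b • v)` in the monoid algebra. -/
lemma A3mul_eq (u v : (↥Δ × ℕ) →₀ ℂ) :
    A3mul Δ b u v = ((AddMonoidAlgebra.ofCoeff u : AMA Δ) *
      (derA Δ (AddMonoidAlgebra.ofCoeff v) + b • AddMonoidAlgebra.ofCoeff v)).coeff := by
  induction u using Finsupp.induction_linear with
  | zero => simp [A3mul_zero_left (b := b)]
  | add f g hf hg =>
    rw [A3mul_add_left, hf, hg, AddMonoidAlgebra.ofCoeff_add, add_mul, AddMonoidAlgebra.coeff_add]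
  | single p c =>
    induction v using Finsupp.induction_linear with
    | zero => simp [A3mul_zero_right (b := b)]
    | add f g hf hg =>
      rw [A3mul_add_right, hf, hg]
      simp only [AddMonoidAlgebra.ofCoeff_add, map_add, smul_add, mul_add,
        AddMonoidAlgebra.coeff_add]
      abel
    | single q d =>
      rw [A3mul_single, AddMonoidAlgebra.ofCoeff_single, AddMonoidAlgebra.ofCoeff_single,
        derA_single]
      obtain ⟨α, i⟩ := p
      obtain ⟨β, j⟩ := q
      rcases j with _ | j <;>
        simp only [mulE, smul_add, mul_add, Algebra.mul_smul_comm, Algebra.smul_mul_assoc,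
          mul_one, one_mul, Nat.cast_zero, zero_smul,
          smul_zero, add_zero, zero_add, Nat.add_zero, Nat.add_succ, Nat.succ_sub_one,
          Nat.cast_succ, Nat.zero_sub, AddMonoidAlgebra.coeff_add, AddMonoidAlgebra.coeff_smul,
          AddMonoidAlgebra.coeff_single] <;>
        module

end A3b
namespace A3d
open A3 A3b
variable {Δ : AddSubgroup ℂ} {b : ℂ}

lemma ax2' (a c e : AMA Δ) :
    (a * (derA Δ c + b • c)) * (derA Δ e + b • e)
      = (a * (derA Δ e + b • e)) * (derA Δ c + b • c) :=
  mul_right_comm _ _ _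

lemma ax1' (a c e : AMA Δ) :
    (a * (derA Δ c + b • c)) * (derA Δ e + b • e)
        - a * (derA Δ (c * (derA Δ e + b • e)) + b • (c * (derA Δ e + b • e)))
      = (c * (derA Δ a + b • a)) * (derA Δ e + b • e)
        - c * (derA Δ (a * (derA Δ e + b • e)) + b • (a * (derA Δ e + b • e))) := by
  simp only [derA_leibniz, map_add, map_smul, smul_add, Algebra.smul_def]
  ring

lemma isNovikov : IsNovikov (A3mul Δ b) := by
  refine ⟨⟨A3mul_add_left, A3mul_add_right, A3mul_smul_left, A3mul_smul_right⟩, ?_, ?_⟩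
  · intro a c e
    simp only [A3mul_eq, AddMonoidAlgebra.ofCoeff_coeff]
    rw [← AddMonoidAlgebra.coeff_sub, ← AddMonoidAlgebra.coeff_sub]
    exact congrArg _ (ax1' _ _ _)
  · intro a c e
    simp only [A3mul_eq, AddMonoidAlgebra.ofCoeff_coeff]
    exact congrArg _ (ax2' _ _ _)

lemma sProd_x3 (α β : Δ) (i j : ℕ) :
    sProd (A3mul Δ b) (x3 Δ α i) (x3 Δ β j)
      = ((α : ℂ) + (β : ℂ) + 2 * b) • x3 Δ (α + β) (i + j)
        + ((i : ℂ) + (j : ℂ)) • x3 Δ (α + β) (i + j - 1) := by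
  rw [sProd, A3mul_x3, A3mul_x3, add_comm β α, add_comm j i]
  module

end A3d
namespace A3e
open A3 A3b A3d
variable {Δ : AddSubgroup ℂ} {b : ℂ}

lemma M_apply (u : (↥Δ × ℕ) →₀ ℂ) (α : Δ) (i : ℕ) :
    A3mul Δ b (x3 Δ 0 0) u (α, i)
      = ((α : ℂ) + b) * u (α, i) + ((i : ℂ) + 1) * u (α, i + 1) := by
  unfold A3mul x3
  rw [Finsupp.sum_single_index (by simp), Finsupp.sum_apply, Finsupp.sum]
  have expand : ∀ q : ↥Δ × ℕ,
      ((1 * u q) • (((q.1 : ℂ) + b) • Finsupp.single ((0:Δ) + q.1, 0 + q.2) (1:ℂ)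
        + (q.2 : ℂ) • Finsupp.single ((0:Δ) + q.1, 0 + q.2 - 1) (1:ℂ))) (α, i)
      = (if q = (α, i) then u q * ((q.1 : ℂ) + b) else 0)
        + (if q = (α, i + 1) then u q * (q.2 : ℂ) else 0) := by
    rintro ⟨β, j⟩
    simp only [one_mul, zero_add, Finsupp.smul_apply, Finsupp.add_apply,
      Finsupp.single_apply, smul_eq_mul]
    by_cases hj0 : j = 0
    · subst hj0
      simp only [Nat.cast_zero, zero_mul, mul_zero, add_zero, ite_self]
      split_ifs <;> ring
    · have hiff : (((β, j - 1) : ↥Δ × ℕ) = (α, i)) = (((β, j) : ↥Δ × ℕ) = (α, i + 1)) := by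
        apply propext
        simp only [Prod.mk.injEq]
        constructor <;> rintro ⟨h1, h2⟩ <;> exact ⟨h1, by omega⟩
      simp only [hiff]
      split_ifs <;> ring
  rw [Finset.sum_congr rfl (fun q _ => expand q), Finset.sum_add_distrib,
    Finset.sum_ite_eq' u.support, Finset.sum_ite_eq' u.support]
  by_cases h1 : ((α, i) : ↥Δ × ℕ) ∈ u.support <;>
    by_cases h2 : ((α, i + 1) : ↥Δ × ℕ) ∈ u.support
  · rw [if_pos h1, if_pos h2]; push_cast; ring
  · rw [if_pos h1, if_neg h2, Finsupp.notMem_support_iff.mp h2]; push_cast; ring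
  · rw [if_neg h1, if_pos h2, Finsupp.notMem_support_iff.mp h1]; push_cast; ring
  · rw [if_neg h1, if_neg h2, Finsupp.notMem_support_iff.mp h1,
      Finsupp.notMem_support_iff.mp h2]
    push_cast; ring

end A3e
namespace A3f
open A3 A3b A3d A3e
variable {Δ : AddSubgroup ℂ} {b : ℂ} {I : Submodule ℂ ((↥Δ × ℕ) →₀ ℂ)}

/-- The operator `T c u = x3 0 0 ∘ u - c • u`, preserving ideals. -/
noncomputable def Top (Δ : AddSubgroup ℂ) (b c : ℂ) (u : (↥Δ × ℕ) →₀ ℂ) : (↥Δ × ℕ) →₀ ℂ :=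
  A3mul Δ b (x3 Δ 0 0) u - c • u

lemma Top_apply (c : ℂ) (u : (↥Δ × ℕ) →₀ ℂ) (β : Δ) (j : ℕ) :
    Top Δ b c u (β, j) = ((β : ℂ) + b - c) * u (β, j) + ((j : ℂ) + 1) * u (β, j + 1) := by
  rw [Top, Finsupp.sub_apply, Finsupp.smul_apply, M_apply, smul_eq_mul]
  ring

lemma Top_mem (hI : IsNovikovIdeal (A3mul Δ b) I) {u : (↥Δ × ℕ) →₀ ℂ} (hu : u ∈ I) (c : ℂ) :
    Top Δ b c u ∈ I :=
  sub_mem ((hI u hu (x3 Δ 0 0)).2) (I.smul_mem c hu)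

lemma step1 (hI : IsNovikovIdeal (A3mul Δ b) I) (α₁ : Δ) :
    ∀ m : ℕ, ∀ u ∈ I, u ≠ 0 → (∀ q ∈ u.support, q.1 = α₁) → (∀ q ∈ u.support, q.2 ≤ m) →
      x3 Δ α₁ 0 ∈ I := by
  intro m
  induction m with
  | zero =>
    intro u hu hne hcol hbd
    have uq0 : ∀ q : ↥Δ × ℕ, q ≠ (α₁, 0) → u q = 0 := by
      intro q h
      by_contra hq
      have hqs : q ∈ u.support := Finsupp.mem_support_iff.mpr hq
      exact h (Prod.ext (hcol q hqs) (Nat.le_zero.mp (hbd q hqs)))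
    have hc : u (α₁, 0) ≠ 0 := by
      intro h0
      apply hne
      ext q
      rcases eq_or_ne q ((α₁, 0) : ↥Δ × ℕ) with rfl | h
      · simpa using h0
      · simpa using uq0 q h
    have hx : x3 Δ α₁ 0 = (u (α₁, 0))⁻¹ • u := by
      ext q
      rcases eq_or_ne q ((α₁, 0) : ↥Δ × ℕ) with rfl | h
      · rw [Finsupp.smul_apply, smul_eq_mul, inv_mul_cancel₀ hc]
        simp [x3]
      · rw [Finsupp.smul_apply, smul_eq_mul, uq0 q h, mul_zero]
        simp [x3, Finsupp.single_apply, Ne.symm h]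
    rw [hx]
    exact I.smul_mem _ hu
  | succ m ih =>
    intro u hu hne hcol hbd
    by_cases hbd' : ∀ q ∈ u.support, q.2 ≤ m
    · exact ih u hu hne hcol hbd'
    · push_neg at hbd'
      obtain ⟨q₀, hq₀s, hq₀⟩ := hbd'
      have hq₀eq : q₀ = ((α₁, m + 1) : ↥Δ × ℕ) :=
        Prod.ext (hcol q₀ hq₀s) (by have := hbd q₀ hq₀s; omega)
      set w := Top Δ b ((α₁ : ℂ) + b) u with hw
      have hzero : ∀ β : Δ, ∀ j : ℕ, β ≠ α₁ → u (β, j) = 0 := by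
        intro β j hβ
        by_contra h
        exact hβ (hcol (β, j) (Finsupp.mem_support_iff.mpr h))
      have hutop : ∀ j : ℕ, m + 1 < j → u (α₁, j) = 0 := by
        intro j hj
        by_contra h
        have := hbd (α₁, j) (Finsupp.mem_support_iff.mpr h)
        omega
      have hwap : ∀ j : ℕ, w (α₁, j) = ((j : ℂ) + 1) * u (α₁, j + 1) := by
        intro j
        rw [hw, Top_apply, sub_self, zero_mul, zero_add]
      have hcolw : ∀ q ∈ w.support, q.1 = α₁ := by
        rintro ⟨β, j⟩ hqs
        by_contra hβ
        have hwq : w (β, j) = 0 := by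
          rw [hw, Top_apply, hzero β j hβ, hzero β (j + 1) hβ]; ring
        exact Finsupp.mem_support_iff.mp hqs hwq
      have hbdw : ∀ q ∈ w.support, q.2 ≤ m := by
        rintro ⟨β, j⟩ hqs
        by_contra hj
        have hwq : w (β, j) = 0 := by
          rcases eq_or_ne β α₁ with rfl | hβ
          · rw [hwap, hutop (j + 1) (by omega), mul_zero]
          · rw [hw, Top_apply, hzero β j hβ, hzero β (j + 1) hβ]; ring
        exact Finsupp.mem_support_iff.mp hqs hwq
      have hwne : w ≠ 0 := by
        intro h0
        have h1 := hwap m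
        rw [h0, Finsupp.zero_apply] at h1
        have hu0 : u (α₁, m + 1) ≠ 0 := by
          rw [← hq₀eq]; exact Finsupp.mem_support_iff.mp hq₀s
        rcases mul_eq_zero.mp h1.symm with h | h
        · exact Nat.cast_add_one_ne_zero m h
        · exact hu0 h
      exact ih w (Top_mem hI hu _) hwne hcolw hbdw

lemma step2 (hI : IsNovikovIdeal (A3mul Δ b) I) (α₁ α₂ : Δ) (hne : α₁ ≠ α₂) (i₁ : ℕ)
    (S : Finset Δ) :
    ∀ N : ℕ, ∀ u ∈ I, (∀ i : ℕ, N ≤ i → u (α₂, i) = 0) →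
      (∀ i : ℕ, i₁ < i → u (α₁, i) = 0) → u (α₁, i₁) ≠ 0 →
      (∀ q ∈ u.support, q.1 ∈ S) →
      ∃ v ∈ I, (∀ i : ℕ, v (α₂, i) = 0) ∧ v (α₁, i₁) ≠ 0 ∧ (∀ q ∈ v.support, q.1 ∈ S) := by
  intro N
  induction N with
  | zero =>
    intro u hu h2 h1t h1 hS
    exact ⟨u, hu, fun i => h2 i (Nat.zero_le i), h1, hS⟩
  | succ N ih =>
    intro u hu h2 h1t h1 hS
    set w := Top Δ b ((α₂ : ℂ) + b) u with hw
    have hwap : ∀ (β : Δ) (j : ℕ),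
        w (β, j) = ((β : ℂ) - (α₂ : ℂ)) * u (β, j) + ((j : ℂ) + 1) * u (β, j + 1) := by
      intro β j
      rw [hw, Top_apply]
      ring
    refine ih w (Top_mem hI hu _) ?_ ?_ ?_ ?_
    · intro i hi
      rw [hwap, sub_self, zero_mul, zero_add, h2 (i + 1) (by omega), mul_zero]
    · intro i hi
      rw [hwap, h1t i hi, h1t (i + 1) (by omega)]
      ring
    · rw [hwap, h1t (i₁ + 1) (by omega), mul_zero, add_zero]
      exact mul_ne_zero (sub_ne_zero.mpr (fun h => hne (Subtype.coe_injective h))) h1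
    · rintro ⟨β, j⟩ hqs
      by_contra hβ
      have hu1 : u (β, j) = 0 := by
        by_contra h
        exact hβ (hS (β, j) (Finsupp.mem_support_iff.mpr h))
      have hu2 : u (β, j + 1) = 0 := by
        by_contra h
        exact hβ (hS (β, j + 1) (Finsupp.mem_support_iff.mpr h))
      exact Finsupp.mem_support_iff.mp hqs (by rw [hwap, hu1, hu2]; ring)

lemma exists_max_col (u : (↥Δ × ℕ) →₀ ℂ) (α₁ : Δ) (h : ∃ p ∈ u.support, p.1 = α₁) :
    ∃ i₁ : ℕ, u (α₁, i₁) ≠ 0 ∧ ∀ i : ℕ, i₁ < i → u (α₁, i) = 0 := by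
  have hcolne : ((u.support.filter (fun p => p.1 = α₁)).image Prod.snd).Nonempty := by
    obtain ⟨p, hp, hpe⟩ := h
    exact ⟨p.2, Finset.mem_image_of_mem _ (Finset.mem_filter.mpr ⟨hp, hpe⟩)⟩
  refine ⟨Finset.max' _ hcolne, ?_, ?_⟩
  · obtain ⟨p, hp, hpe⟩ := Finset.mem_image.mp (Finset.max'_mem _ hcolne)
    obtain ⟨hp2, hp1⟩ := Finset.mem_filter.mp hp
    obtain ⟨pa, pb⟩ := p
    dsimp only at hp1 hpe
    subst hp1
    subst hpe
    exact Finsupp.mem_support_iff.mp hp2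
  · intro i hi
    by_contra h'
    have hmem : i ∈ (u.support.filter (fun p => p.1 = α₁)).image Prod.snd :=
      Finset.mem_image_of_mem _ (Finset.mem_filter.mpr
        ⟨Finsupp.mem_support_iff.mpr h', (show ((α₁, i) : ↥Δ × ℕ).1 = α₁ from rfl)⟩)
    have := Finset.le_max' _ i hmem
    omega

lemma exists_x30 (hI : IsNovikovIdeal (A3mul Δ b) I) :
    ∀ n : ℕ, ∀ u ∈ I, u ≠ 0 → (u.support.image Prod.fst).card ≤ n →
      ∃ γ : Δ, x3 Δ γ 0 ∈ I := by
  intro n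
  induction n with
  | zero =>
    intro u hu hne hcard
    obtain ⟨q, hq⟩ := Finsupp.support_nonempty_iff.mpr hne
    have : q.1 ∈ u.support.image Prod.fst := Finset.mem_image_of_mem _ hq
    have := Finset.card_pos.mpr ⟨q.1, this⟩
    omega
  | succ n ih =>
    intro u hu hne hcard
    obtain ⟨q, hq⟩ := Finsupp.support_nonempty_iff.mpr hne
    by_cases hc : (u.support.image Prod.fst).card ≤ 1
    · -- single column
      have hcol : ∀ p ∈ u.support, p.1 = q.1 := by
        intro p hp
        exact Finset.card_le_one.mp hc _ (Finset.mem_image_of_mem _ hp) _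
          (Finset.mem_image_of_mem _ hq)
      exact ⟨q.1, step1 hI q.1 (u.support.sup Prod.snd) u hu hne hcol
        (fun p hp => Finset.le_sup hp)⟩
    · push_neg at hc
      obtain ⟨α₁, hα₁, α₂, hα₂, hne12⟩ := Finset.one_lt_card.mp hc
      -- i₁ : max second index in column α₁
      have hα₁' : ∃ p ∈ u.support, p.1 = α₁ := by
        obtain ⟨p, hp, hpe⟩ := Finset.mem_image.mp hα₁
        exact ⟨p, hp, hpe⟩
      obtain ⟨i₁, hmax, htop⟩ := exists_max_col u α₁ hα₁'
      have hN : ∀ i : ℕ, u.support.sup Prod.snd + 1 ≤ i → u (α₂, i) = 0 := by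
        intro i hi
        by_contra h
        have := Finset.le_sup (f := Prod.snd) (Finsupp.mem_support_iff.mpr h)
        simp only at this
        omega
      obtain ⟨v, hvI, hv2, hv1, hvS⟩ := step2 hI α₁ α₂ hne12 i₁ (u.support.image Prod.fst)
        (u.support.sup Prod.snd + 1) u hu hN htop hmax
        (fun p hp => Finset.mem_image_of_mem _ hp)
      have hvne : v ≠ 0 := by
        intro h0
        rw [h0, Finsupp.zero_apply] at hv1
        exact hv1 rfl
      refine ih v hvI hvne ?_
      have hsub : v.support.image Prod.fst ⊆ (u.support.image Prod.fst).erase α₂ := by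
        intro β hβ
        obtain ⟨p, hp, hpe⟩ := Finset.mem_image.mp hβ
        refine Finset.mem_erase.mpr ⟨?_, by rw [← hpe]; exact hvS p hp⟩
        intro hβ2
        have : p = ((α₂, p.2) : ↥Δ × ℕ) := Prod.ext (by rw [hpe, hβ2]) rfl
        rw [this] at hp
        exact Finsupp.mem_support_iff.mp hp (hv2 p.2)
      have := Finset.card_le_card hsub
      have := Finset.card_erase_of_mem hα₂
      omega

end A3f
namespace A3g
open A3 A3b A3d A3e A3f
variable {Δ : AddSubgroup ℂ} {b : ℂ} {I : Submodule ℂ ((↥Δ × ℕ) →₀ ℂ)}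

lemma single_eq_smul_x3 (p : ↥Δ × ℕ) (c : ℂ) :
    Finsupp.single p c = c • x3 Δ p.1 p.2 := by
  simp [x3, Finsupp.smul_single]

lemma gen_col (hI : IsNovikovIdeal (A3mul Δ b) I) (γ : Δ) (hγ : x3 Δ γ 0 ∈ I) (η : Δ)
    (j : ℕ) : x3 Δ η j ∈ I := by
  have hP : ∀ k : ℕ, (((η : ℂ) - (γ : ℂ) + b) • x3 Δ η k + (k : ℂ) • x3 Δ η (k - 1)) ∈ I := by
    intro k
    have h := (hI _ hγ (x3 Δ (η - γ) k)).1
    rw [A3mul_x3, show γ + (η - γ) = η from by abel] at h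
    simpa [AddSubgroupClass.coe_sub] using h
  by_cases hc : ((η : ℂ) - (γ : ℂ) + b) = 0
  · have h := hP (j + 1)
    rw [hc, zero_smul, zero_add, Nat.add_sub_cancel] at h
    push_cast at h
    have h2 := I.smul_mem (((j : ℂ) + 1)⁻¹) h
    rwa [smul_smul, inv_mul_cancel₀ (Nat.cast_add_one_ne_zero j), one_smul] at h2
  · induction j with
    | zero =>
      have h := hP 0
      rw [Nat.cast_zero, zero_smul, add_zero] at h
      have h2 := I.smul_mem (((η : ℂ) - (γ : ℂ) + b)⁻¹) h
      rwa [smul_smul, inv_mul_cancel₀ hc, one_smul] at h2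
    | succ j ihj =>
      have h := hP (j + 1)
      rw [Nat.add_sub_cancel] at h
      push_cast at h
      have h3 : (((η : ℂ) - (γ : ℂ) + b) • x3 Δ η (j + 1)) ∈ I := by
        have := I.sub_mem h (I.smul_mem ((j : ℂ) + 1) ihj)
        rwa [show (((η:ℂ) - (γ:ℂ) + b) • x3 Δ η (j+1) + ((j:ℕ)+1 : ℂ) • x3 Δ η j)
            - ((j:ℂ)+1) • x3 Δ η j = ((η:ℂ) - (γ:ℂ) + b) • x3 Δ η (j+1) from by
          push_cast; abel] at this
      have h2 := I.smul_mem (((η : ℂ) - (γ : ℂ) + b)⁻¹) h3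
      rwa [smul_smul, inv_mul_cancel₀ hc, one_smul] at h2

lemma ideal_top (hI : IsNovikovIdeal (A3mul Δ b) I) (γ : Δ) (hγ : x3 Δ γ 0 ∈ I) : I = ⊤ := by
  have hall : ∀ u : (↥Δ × ℕ) →₀ ℂ, u ∈ I := by
    intro u
    induction u using Finsupp.induction_linear with
    | zero => exact zero_mem I
    | add f g hf hg => exact add_mem hf hg
    | single p c =>
      rw [single_eq_smul_x3]
      exact I.smul_mem c (gen_col hI γ hγ p.1 p.2)
  exact eq_top_iff.mpr fun u _ => hall u

lemma nontriv : ∃ u v : (↥Δ × ℕ) →₀ ℂ, A3mul Δ b u v ≠ 0 := by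
  refine ⟨x3 Δ 0 0, x3 Δ 0 1, ?_⟩
  rw [A3mul_x3]
  intro h
  have h2 := congrArg (fun f : (↥Δ × ℕ) →₀ ℂ => f (0, 0)) h
  simp [x3, Finsupp.single_apply] at h2

lemma simple : NovikovSimple (A3mul Δ b) := by
  refine ⟨nontriv, ?_⟩
  intro I hI
  by_cases hbot : I = ⊥
  · exact Or.inl hbot
  · right
    obtain ⟨u, huI, hune⟩ := Submodule.ne_bot_iff I |>.mp hbot
    obtain ⟨γ, hγ⟩ := exists_x30 hI (u.support.image Prod.fst).card u huI hune le_rfl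
    exact ideal_top hI γ hγ

lemma span_x3 (γ : Δ) (k : ℕ) :
    x3 Δ γ k ∈ Submodule.span ℂ {x : (↥Δ × ℕ) →₀ ℂ | ∃ u v, x = sProd (A3mul Δ b) u v} := by
  set S := Submodule.span ℂ {x : (↥Δ × ℕ) →₀ ℂ | ∃ u v, x = sProd (A3mul Δ b) u v} with hS
  have hP : ∀ m : ℕ, (((γ : ℂ) + 2 * b) • x3 Δ γ m + (m : ℂ) • x3 Δ γ (m - 1)) ∈ S := by
    intro m
    have h : sProd (A3mul Δ b) (x3 Δ γ m) (x3 Δ 0 0) ∈ S :=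
      Submodule.subset_span ⟨x3 Δ γ m, x3 Δ 0 0, rfl⟩
    rw [sProd_x3] at h
    simpa using h
  by_cases hc : ((γ : ℂ) + 2 * b) = 0
  · have h := hP (k + 1)
    rw [hc, zero_smul, zero_add, Nat.add_sub_cancel] at h
    push_cast at h
    have h2 := S.smul_mem (((k : ℂ) + 1)⁻¹) h
    rwa [smul_smul, inv_mul_cancel₀ (Nat.cast_add_one_ne_zero k), one_smul] at h2
  · induction k with
    | zero =>
      have h := hP 0
      rw [Nat.cast_zero, zero_smul, add_zero] at h
      have h2 := S.smul_mem (((γ : ℂ) + 2 * b)⁻¹) h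
      rwa [smul_smul, inv_mul_cancel₀ hc, one_smul] at h2
    | succ k ihk =>
      have h := hP (k + 1)
      rw [Nat.add_sub_cancel] at h
      push_cast at h
      have h3 : (((γ : ℂ) + 2 * b) • x3 Δ γ (k + 1)) ∈ S := by
        have := S.sub_mem h (S.smul_mem ((k : ℂ) + 1) ihk)
        rwa [show (((γ:ℂ) + 2*b) • x3 Δ γ (k+1) + ((k:ℕ)+1 : ℂ) • x3 Δ γ k)
            - ((k:ℂ)+1) • x3 Δ γ k = ((γ:ℂ) + 2*b) • x3 Δ γ (k+1) from by
          push_cast; abel] at this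
      have h2 := S.smul_mem (((γ : ℂ) + 2 * b)⁻¹) h3
      rwa [smul_smul, inv_mul_cancel₀ hc, one_smul] at h2

lemma span_top :
    Submodule.span ℂ {x : (↥Δ × ℕ) →₀ ℂ | ∃ u v, x = sProd (A3mul Δ b) u v} = ⊤ := by
  refine eq_top_iff.mpr fun u hu => ?_
  clear hu
  induction u using Finsupp.induction_linear with
  | zero => exact zero_mem _
  | add f g hf hg => exact add_mem hf hg
  | single p c =>
    rw [single_eq_smul_x3]
    exact Submodule.smul_mem _ c (span_x3 p.1 p.2)

end A3g


/-- `A₃` is a simple Novikov algebra, its symmetrized product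
satisfies `x_{α,i} ∗ x_{β,j} = (α+β+2b) x_{α+β,i+j} + (i+j) x_{α+β,i+j−1}`,
and `A₃ = A₃ ∗ A₃`. -/
theorem stmt_16 (Δ : AddSubgroup ℂ) (b : ℂ) :
    IsNovikov (A3mul Δ b) ∧ NovikovSimple (A3mul Δ b) ∧
    (∀ (α β : Δ) (i j : ℕ),
      sProd (A3mul Δ b) (x3 Δ α i) (x3 Δ β j)
        = ((α : ℂ) + (β : ℂ) + 2 * b) • x3 Δ (α + β) (i + j)
          + ((i : ℂ) + (j : ℂ)) • x3 Δ (α + β) (i + j - 1)) ∧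
    Submodule.span ℂ
      {x : (Δ × ℕ) →₀ ℂ | ∃ u v, x = sProd (A3mul Δ b) u v} = ⊤ :=
  ⟨A3d.isNovikov, A3g.simple, fun α β i j => A3d.sProd_x3 α β i j, A3g.span_top⟩
end
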